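/- Let 0 < γ < 1. (i) For all real x > −1, (1+x)^γ ≥ 1 + γx − (1−γ)x². (ii) If moreover (γ/2)^{1/(2−γ)} ≥ (1−γ)/(2−γ), then the function x ↦ (1−γ)x² + (1+x)^γ is strictly monotone increasing on (−1, ∞). -/

import Mathlib

/-! Everything rests on Bernoulli's inequality `1 + q s ≤ (1 + s) ^ q` for `q ∈ [-1, 0]`, i.e. on
`t ↦ t ^ q` lying above its tangent lines. Part (i) is this for `q = γ - 1`, multiplied by `1 + x`.
For (ii), in the variable `t = 1 + x` the derivative is `γ t ^ (γ - 1) + 2 (1 - γ) (t - 1)`.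
At `T = (γ / 2) ^ (1 / (2 - γ))` one has `γ T ^ (γ - 1) = 2 T`, so the tangent of `γ t ^ (γ - 1)`
at `T` has slope `-2 (1 - γ)` and the derivative exceeds `2 ((2 - γ) T - (1 - γ)) ≥ 0` for every
`t ≠ T`. A derivative that is positive off a single point still forces strict monotonicity. -/

open Real Set

theorem one_add_mul_self_lt_rpow_one_add_of_neg {s : ℝ} (hs : -1 < s) (hs' : s ≠ 0) {q : ℝ}
    (hq1 : -1 ≤ q) (hq0 : q < 0) : 1 + q * s < (1 + s) ^ q := by
  have h1s : 0 < 1 + s := by linarith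
  have hpos : 0 < (1 + s) ^ (-q) := rpow_pos_of_pos h1s _
  -- Bernoulli for the exponent `-q ∈ (0, 1]`, then invert.
  have hbern : (1 + s) ^ (-q) ≤ 1 + -q * s :=
    rpow_one_add_le_one_add_mul_self hs.le (by linarith) (by linarith)
  have hqs : 0 < (q * s) ^ 2 := pow_two_pos_of_ne_zero (mul_ne_zero hq0.ne hs')
  calc 1 + q * s < (1 + -q * s)⁻¹ := by
        rw [← one_div, lt_div_iff₀ (by linarith)]; nlinarith
    _ ≤ ((1 + s) ^ (-q))⁻¹ := inv_anti₀ hpos hbern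
    _ = (1 + s) ^ q := by rw [rpow_neg h1s.le, inv_inv]

theorem one_add_mul_self_le_rpow_one_add_of_nonpos {s : ℝ} (hs : -1 < s) {q : ℝ}
    (hq1 : -1 ≤ q) (hq0 : q ≤ 0) : 1 + q * s ≤ (1 + s) ^ q := by
  rcases eq_or_ne s 0 with rfl | hs'
  · simp
  rcases hq0.lt_or_eq with hq0 | rfl
  · exact (one_add_mul_self_lt_rpow_one_add_of_neg hs hs' hq1 hq0).le
  · simp

theorem one_add_mul_sub_mul_sq_le_rpow_one_add {γ x : ℝ} (hγ0 : 0 ≤ γ) (hγ1 : γ ≤ 1)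
    (hx : -1 < x) : 1 + γ * x - (1 - γ) * x ^ 2 ≤ (1 + x) ^ γ := by
  have h1x : 0 < 1 + x := by linarith
  calc 1 + γ * x - (1 - γ) * x ^ 2 = (1 + x) * (1 + (γ - 1) * x) := by ring
    _ ≤ (1 + x) * (1 + x) ^ (γ - 1) :=
        mul_le_mul_of_nonneg_left
          (one_add_mul_self_le_rpow_one_add_of_nonpos hx (by linarith) (by linarith)) h1x.le
    _ = (1 + x) ^ γ := by rw [rpow_sub_one h1x.ne', mul_div_cancel₀ _ h1x.ne']

theorem rpow_add_mul_rpow_sub_one_mul_sub_lt_rpow {q T t : ℝ} (hq1 : -1 ≤ q) (hq0 : q < 0)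
    (hT : 0 < T) (ht : 0 < t) (htT : t ≠ T) : T ^ q + q * T ^ (q - 1) * (t - T) < t ^ q := by
  have hs : -1 < t / T - 1 := by have := div_pos ht hT; linarith
  have hs' : t / T - 1 ≠ 0 := by
    rwa [sub_ne_zero, ne_eq, div_eq_one_iff_eq hT.ne']
  have key := one_add_mul_self_lt_rpow_one_add_of_neg hs hs' hq1 hq0
  rw [add_sub_cancel, div_rpow ht.le hT.le] at key
  have hTq : 0 < T ^ q := rpow_pos_of_pos hT q
  calc T ^ q + q * T ^ (q - 1) * (t - T) = T ^ q * (1 + q * (t / T - 1)) := by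
        rw [rpow_sub_one hT.ne']; field_simp
    _ < T ^ q * (t ^ q / T ^ q) := by gcongr
    _ = t ^ q := mul_div_cancel₀ _ hTq.ne'

theorem hasDerivAt_mul_sq_add_rpow_one_add (c γ : ℝ) {x : ℝ} (hx : -1 < x) :
    HasDerivAt (fun x : ℝ => c * x ^ 2 + (1 + x) ^ γ) (2 * c * x + γ * (1 + x) ^ (γ - 1)) x := by
  have hpow : HasDerivAt (fun y : ℝ => (1 + y) ^ γ) (γ * (1 + x) ^ (γ - 1) * 1) x :=
    (hasDerivAt_rpow_const (Or.inl (by linarith))).comp x ((hasDerivAt_id x).const_add 1)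
  exact (((hasDerivAt_pow 2 x).const_mul c).add hpow).congr_deriv (by push_cast; ring)

theorem strictMonoOn_Ioi_of_hasDerivAt_of_pos_of_ne {f f' : ℝ → ℝ} {a c : ℝ}
    (hf : ∀ x ∈ Ioi a, HasDerivAt f (f' x) x) (hf' : ∀ x ∈ Ioi a, x ≠ c → 0 < f' x) :
    StrictMonoOn f (Ioi a) := by
  have mono_of {D : Set ℝ} (hDa : D ⊆ Ioi a) (hD : Convex ℝ D) (hc : ∀ x ∈ interior D, x ≠ c) :
      StrictMonoOn f D :=
    strictMonoOn_of_hasDerivWithinAt_pos hD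
      (fun x hx ↦ (hf x (hDa hx)).continuousAt.continuousWithinAt)
      (fun x hx ↦ (hf x (hDa (interior_subset hx))).hasDerivWithinAt)
      (fun x hx ↦ hf' x (hDa (interior_subset hx)) (hc x hx))
  rcases le_or_gt c a with hca | hac
  · refine mono_of subset_rfl (convex_Ioi a) fun x hx ↦ ?_
    rw [interior_Ioi] at hx
    exact (hca.trans_lt hx).ne'
  · rw [← Ioc_union_Ici_eq_Ioi hac]
    refine (mono_of Ioc_subset_Ioi_self (convex_Ioc a c) fun x hx ↦ ?_).union
      (mono_of (Ici_subset_Ioi.2 hac) (convex_Ici c) fun x hx ↦ ?_) (isGreatest_Ioc hac) isLeast_Ici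
    · rw [interior_Ioc] at hx; exact hx.2.ne
    · rw [interior_Ici] at hx; exact hx.ne'

theorem mul_rpow_sub_one_eq_two_mul {γ : ℝ} (hγ0 : 0 < γ) (hγ2 : γ ≠ 2) :
    γ * ((γ / 2) ^ (1 / (2 - γ))) ^ (γ - 1) = 2 * (γ / 2) ^ (1 / (2 - γ)) := by
  set T := (γ / 2) ^ (1 / (2 - γ)) with hTdef
  have hT0 : 0 < T := rpow_pos_of_pos (by linarith) _
  have hT2 : T ^ (2 - γ) = γ / 2 := by
    rw [hTdef, one_div, rpow_inv_rpow (by linarith) (sub_ne_zero.2 hγ2.symm)]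
  rw [show γ - 1 = 1 - (2 - γ) by ring, rpow_sub hT0, rpow_one, hT2]
  field_simp

theorem two_mul_mul_add_mul_rpow_pos {γ x : ℝ} (hγ0 : 0 < γ) (hγ1 : γ < 1)
    (hT : (1 - γ) / (2 - γ) ≤ (γ / 2) ^ (1 / (2 - γ))) (hx : -1 < x)
    (hxT : 1 + x ≠ (γ / 2) ^ (1 / (2 - γ))) : 0 < 2 * (1 - γ) * x + γ * (1 + x) ^ (γ - 1) := by
  set T := (γ / 2) ^ (1 / (2 - γ))
  have hT0 : 0 < T := rpow_pos_of_pos (by linarith) _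
  have htan := rpow_add_mul_rpow_sub_one_mul_sub_lt_rpow (q := γ - 1) (by linarith)
    (by linarith) hT0 (by linarith) hxT
  rw [rpow_sub_one hT0.ne' (γ - 1)] at htan
  have hcrit : γ * T ^ (γ - 1) = 2 * T := mul_rpow_sub_one_eq_two_mul hγ0 (by linarith)
  have hcrit' : γ * (T ^ (γ - 1) / T) = 2 := by rw [← mul_div_assoc, hcrit]; field_simp
  have hT' : 1 - γ ≤ (2 - γ) * T := by rw [mul_comm]; exact (div_le_iff₀ (by linarith)).1 hT
  calc 0 ≤ 2 * ((2 - γ) * T - (1 - γ)) := by linarith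
    _ = 2 * (1 - γ) * x + γ * (T ^ (γ - 1) + (γ - 1) * (T ^ (γ - 1) / T) * (1 + x - T)) := by
        linear_combination (-1) * hcrit - (γ - 1) * (1 + x - T) * hcrit'
    _ < 2 * (1 - γ) * x + γ * (1 + x) ^ (γ - 1) := by gcongr

/-- **Lemma 3.6**: for `0 < γ < 1`, (i) `(1+x)^γ ≥ 1 + γx - (1-γ)x²` for all `x > -1`;
(ii) if `(γ/2)^{1/(2-γ)} ≥ (1-γ)/(2-γ)`, then `x ↦ (1-γ)x² + (1+x)^γ` is strictly
increasing on `(-1, ∞)`. -/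
theorem power_lower_bound_and_monotone (γ : ℝ) (hγ0 : 0 < γ) (hγ1 : γ < 1) :
    (∀ x : ℝ, -1 < x → (1 + x) ^ γ ≥ 1 + γ * x - (1 - γ) * x ^ 2) ∧
    ((γ/2) ^ (1/(2-γ)) ≥ (1-γ)/(2-γ) →
      StrictMonoOn (fun x : ℝ => (1-γ) * x ^ 2 + (1+x) ^ γ) (Set.Ioi (-1 : ℝ))) := by
  refine ⟨fun x hx ↦ one_add_mul_sub_mul_sq_le_rpow_one_add hγ0.le hγ1.le hx, fun hT ↦ ?_⟩
  refine strictMonoOn_Ioi_of_hasDerivAt_of_pos_of_ne (c := (γ / 2) ^ (1 / (2 - γ)) - 1)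
    (fun x hx ↦ hasDerivAt_mul_sq_add_rpow_one_add (1 - γ) γ hx) fun x hx hxc ↦ ?_
  exact two_mul_mul_add_mul_rpow_pos hγ0 hγ1 hT hx fun h ↦ hxc (by linarith)
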